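/- Let (X,d) be a metric space, let f be a compatible unbounded modulus function, let (A_k) be a sequence in CL(X) and A ∈ CL(X). Then (A_k) is Wijsman f-strong Cesàro convergent to A if and only if (A_k) is Wijsman strong Cesàro convergent to A. -/

import Mathlib

open Filter Metric Set

/-- `f : ℝ → ℝ` is an (unbounded) modulus function (considered on `[0,∞)`):
`f x = 0 ↔ x = 0`, subadditive, increasing, continuous from the right at `0`,
and unbounded. -/
def IsModulus (f : ℝ → ℝ) : Prop :=
  (∀ x ∈ Set.Ici (0:ℝ), 0 ≤ f x) ∧
  (∀ x ∈ Set.Ici (0:ℝ), (f x = 0 ↔ x = 0)) ∧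
  (∀ x ∈ Set.Ici (0:ℝ), ∀ y ∈ Set.Ici (0:ℝ), f (x + y) ≤ f x + f y) ∧
  MonotoneOn f (Set.Ici (0:ℝ)) ∧
  ContinuousWithinAt f (Set.Ici (0:ℝ)) 0 ∧
  (∀ M : ℝ, ∃ x ∈ Set.Ici (0:ℝ), M < f x)

/-- `φ(ε) = limsup_n f(nε)/f(n)`. -/
noncomputable def modPhi (f : ℝ → ℝ) (ε : ℝ) : ℝ :=
  Filter.limsup (fun n : ℕ => f ((n : ℝ) * ε) / f (n : ℝ)) Filter.atTop

/-- A modulus function is compatible if `φ(ε) → 0` as `ε → 0⁺`. -/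
def Compatible (f : ℝ → ℝ) : Prop :=
  Filter.Tendsto (modPhi f) (nhdsWithin 0 (Set.Ioi 0)) (nhds 0)

/-- Wijsman statistical convergence of a sequence of subsets of a metric space. -/
def WijsmanStatConv {X : Type*} [MetricSpace X] (A : ℕ → Set X) (B : Set X) : Prop :=
  ∀ x : X, ∀ ε > (0:ℝ),
    Filter.Tendsto (fun n : ℕ =>
      (((Finset.range n).filter
        (fun j => ε < |infDist x (A j) - infDist x B|)).card : ℝ) / (n : ℝ))
      Filter.atTop (nhds 0)

/-- Wijsman `f`-statistical convergence of a sequence of subsets of a metric space. -/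
def WijsmanFStatConv {X : Type*} [MetricSpace X] (f : ℝ → ℝ) (A : ℕ → Set X)
    (B : Set X) : Prop :=
  ∀ x : X, ∀ ε > (0:ℝ),
    Filter.Tendsto (fun n : ℕ =>
      f ((((Finset.range n).filter
        (fun j => ε < |infDist x (A j) - infDist x B|)).card : ℝ)) / f (n : ℝ))
      Filter.atTop (nhds 0)

/-- A real sequence is `f`-strong Cesàro convergent to `L`. -/
def FStrongCesaro (f : ℝ → ℝ) (x : ℕ → ℝ) (L : ℝ) : Prop :=
  Filter.Tendsto (fun n : ℕ =>
    f (∑ j ∈ Finset.range n, |x j - L|) / f (n : ℝ)) Filter.atTop (nhds 0)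

/-- Wijsman `f`-strong Cesàro convergence. -/
def WijsmanFStrongCesaro {X : Type*} [MetricSpace X] (f : ℝ → ℝ) (A : ℕ → Set X)
    (B : Set X) : Prop :=
  ∀ x : X, FStrongCesaro f (fun j => infDist x (A j)) (infDist x B)

/-- Wijsman strong Cesàro convergence (the case `f = id`). -/
def WijsmanStrongCesaro {X : Type*} [MetricSpace X] (A : ℕ → Set X) (B : Set X) : Prop :=
  ∀ x : X,
    Filter.Tendsto (fun n : ℕ =>
      (∑ j ∈ Finset.range n, |infDist x (A j) - infDist x B|) / (n : ℝ))
      Filter.atTop (nhds 0)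

/-- A real sequence is uniformly integrable. -/
def UnifIntegrable (x : ℕ → ℝ) : Prop :=
  Filter.Tendsto (fun c : ℝ =>
    ⨆ n : ℕ, (∑ j ∈ Finset.range n, if c ≤ |x j| then |x j| else 0) / (n : ℝ))
    Filter.atTop (nhds 0)

/-- Wijsman uniform integrability. -/
def WijsmanUnifIntegrable {X : Type*} [MetricSpace X] (A : ℕ → Set X) : Prop :=
  ∀ x : X, UnifIntegrable (fun j => infDist x (A j))

/-- A lacunary sequence: strictly increasing, starting at `0`,
with gaps `h_r = k_{r+1} - k_r → ∞`. -/
def IsLacunary (k : ℕ → ℕ) : Prop :=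
  k 0 = 0 ∧ StrictMono k ∧
    Filter.Tendsto (fun r : ℕ => k (r + 1) - k r) Filter.atTop Filter.atTop

/-- The gaps `h_r` of a lacunary sequence. -/
def lacH (k : ℕ → ℕ) (r : ℕ) : ℕ := k (r + 1) - k r

/-- The blocks `I_r = (k_r, k_{r+1}]` of a lacunary sequence. -/
def lacI (k : ℕ → ℕ) (r : ℕ) : Finset ℕ := Finset.Ioc (k r) (k (r + 1))

/-- `φ_θ(ε) = limsup_t f(h_t ε)/f(h_t)`. -/
noncomputable def modPhiTheta (f : ℝ → ℝ) (k : ℕ → ℕ) (ε : ℝ) : ℝ :=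
  Filter.limsup (fun t : ℕ => f ((lacH k t : ℝ) * ε) / f ((lacH k t : ℝ))) Filter.atTop

/-- `f` is `θ`-compatible if `φ_θ(ε) → 0` as `ε → 0⁺`. -/
def ThetaCompatible (f : ℝ → ℝ) (k : ℕ → ℕ) : Prop :=
  Filter.Tendsto (modPhiTheta f k) (nhdsWithin 0 (Set.Ioi 0)) (nhds 0)

/-- Wijsman `θ`-lacunary statistical convergence. -/
def WijsmanLacStatConv {X : Type*} [MetricSpace X] (k : ℕ → ℕ) (A : ℕ → Set X)
    (B : Set X) : Prop :=
  ∀ x : X, ∀ ε > (0:ℝ),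
    Filter.Tendsto (fun r : ℕ =>
      (((lacI k r).filter
        (fun j => ε < |infDist x (A j) - infDist x B|)).card : ℝ) / (lacH k r : ℝ))
      Filter.atTop (nhds 0)

/-- Wijsman `θ`-lacunary `f`-statistical convergence. -/
def WijsmanLacFStatConv {X : Type*} [MetricSpace X] (f : ℝ → ℝ) (k : ℕ → ℕ)
    (A : ℕ → Set X) (B : Set X) : Prop :=
  ∀ x : X, ∀ ε > (0:ℝ),
    Filter.Tendsto (fun r : ℕ =>
      f ((((lacI k r).filter
        (fun j => ε < |infDist x (A j) - infDist x B|)).card : ℝ)) / f ((lacH k r : ℝ)))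
      Filter.atTop (nhds 0)

/-- Wijsman `θ`-lacunary `f`-strong Cesàro convergence. -/
def WijsmanLacFStrongCesaro {X : Type*} [MetricSpace X] (f : ℝ → ℝ) (k : ℕ → ℕ)
    (A : ℕ → Set X) (B : Set X) : Prop :=
  ∀ x : X,
    Filter.Tendsto (fun r : ℕ =>
      f (∑ j ∈ lacI k r, |infDist x (A j) - infDist x B|) / f ((lacH k r : ℝ)))
      Filter.atTop (nhds 0)

/-- Wijsman `θ`-lacunary strong Cesàro convergence (the case `f = id`). -/
def WijsmanLacStrongCesaro {X : Type*} [MetricSpace X] (k : ℕ → ℕ)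
    (A : ℕ → Set X) (B : Set X) : Prop :=
  ∀ x : X,
    Filter.Tendsto (fun r : ℕ =>
      (∑ j ∈ lacI k r, |infDist x (A j) - infDist x B|) / (lacH k r : ℝ))
      Filter.atTop (nhds 0)

/-- A real sequence is `θ`-lacunary uniformly integrable. -/
def LacUnifIntegrable (k : ℕ → ℕ) (x : ℕ → ℝ) : Prop :=
  Filter.Tendsto (fun M : ℝ =>
    ⨆ t : ℕ, (∑ j ∈ lacI k t, if M ≤ |x j| then |x j| else 0) / (lacH k t : ℝ))
    Filter.atTop (nhds 0)

/-- Wijsman `θ`-lacunary uniform integrability. -/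
def WijsmanLacUnifIntegrable {X : Type*} [MetricSpace X] (k : ℕ → ℕ)
    (A : ℕ → Set X) : Prop :=
  ∀ x : X, LacUnifIntegrable k (fun j => infDist x (A j))


/-!
For fixed `x`, both conditions concern the nonnegative partial sums
`s n = ∑_{k<n} |d(x, A k) - d(x, B)|`, so it suffices to show that `f (s n) / f n → 0` iff
`s n / n → 0`. If `s n ≥ c n` along a subsequence, subadditivity gives
`f n ≤ ⌈1/c⌉ f (s n)` there, so `f (s n) / f n` stays away from `0`. Conversely, if
`s n ≤ n ε` eventually, monotonicity gives `f (s n) / f n ≤ f (n ε) / f n`, whose limsup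
`φ(ε)` is as small as we like by compatibility.
-/

namespace IsModulus

variable {f : ℝ → ℝ}

theorem apply_nonneg (hf : IsModulus f) {x : ℝ} (hx : 0 ≤ x) : 0 ≤ f x :=
  hf.1 x hx

theorem apply_zero (hf : IsModulus f) : f 0 = 0 :=
  (hf.2.1 0 (mem_Ici.2 le_rfl)).mpr rfl

theorem apply_pos (hf : IsModulus f) {x : ℝ} (hx : 0 < x) : 0 < f x :=
  (hf.apply_nonneg hx.le).lt_of_ne fun h => hx.ne' ((hf.2.1 x hx.le).mp h.symm)

theorem monotoneOn (hf : IsModulus f) : MonotoneOn f (Ici 0) :=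
  hf.2.2.2.1

theorem apply_natCast_mul_le (hf : IsModulus f) (k : ℕ) {x : ℝ} (hx : 0 ≤ x) :
    f (k * x) ≤ k * f x := by
  induction k with
  | zero => simp [hf.apply_zero]
  | succ k ih =>
    calc f ((k + 1 : ℕ) * x) = f (k * x + x) := by push_cast; ring_nf
      _ ≤ f (k * x) + f x := hf.2.2.1 _ (mul_nonneg k.cast_nonneg hx) _ hx
      _ ≤ (k + 1 : ℕ) * f x := by push_cast; linarith

theorem tendsto_div_of_tendsto_apply_div (hf : IsModulus f) {ι : Type*} {l : Filter ι}
    {u v : ι → ℝ} (hu : ∀ i, 0 ≤ u i) (hv : ∀ i, 0 ≤ v i)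
    (h : Tendsto (fun i => f (u i) / f (v i)) l (nhds 0)) :
    Tendsto (fun i => u i / v i) l (nhds 0) := by
  refine tendsto_order.2 ⟨fun c hc => .of_forall fun i => hc.trans_le (div_nonneg (hu i) (hv i)),
    fun c hc => ?_⟩
  set k := ⌈c⁻¹⌉₊
  have hk : 0 < (k : ℝ) := Nat.cast_pos.2 (Nat.ceil_pos.2 (inv_pos.2 hc))
  have hkc : 1 ≤ k * c := (inv_le_iff_one_le_mul₀ hc).1 (Nat.le_ceil _)
  filter_upwards [(tendsto_order.1 h).2 _ (inv_pos.2 hk)] with i hi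
  by_contra! hcu
  have hvi : 0 < v i := (hv i).lt_of_ne fun h0 => by simp [← h0] at hcu; linarith
  have hv_le : v i ≤ k * u i := by nlinarith [(le_div_iff₀ hvi).1 hcu]
  have hf_le : f (v i) ≤ k * f (u i) :=
    (hf.monotoneOn (hv i) (mul_nonneg hk.le (hu i)) hv_le).trans
      (hf.apply_natCast_mul_le k (hu i))
  have hlt : k * f (u i) < f (v i) :=
    (lt_inv_mul_iff₀ hk).1 ((div_lt_iff₀ (hf.apply_pos hvi)).1 hi)
  linarith

theorem exists_eventually_apply_mul_div_lt (hf : IsModulus f) (hfc : Compatible f) {δ : ℝ}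
    (hδ : 0 < δ) : ∃ ε > 0, ∀ᶠ n : ℕ in atTop, f (n * ε) / f n < δ := by
  obtain ⟨ε, hφ, hε, hε1⟩ :=
    ((tendsto_order.1 hfc).2 δ hδ |>.and (Ioo_mem_nhdsGT one_pos)).exists
  refine ⟨ε, hε, eventually_lt_of_limsup_lt hφ ⟨1, eventually_map.2 (.of_forall fun n => ?_)⟩⟩
  have hn : (0 : ℝ) ≤ n := n.cast_nonneg
  exact div_le_one_of_le₀ (hf.monotoneOn (mul_nonneg hn hε.le) hn
    (mul_le_of_le_one_right hn hε1.le)) (hf.apply_nonneg hn)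

theorem tendsto_apply_div_of_tendsto_div (hf : IsModulus f) (hfc : Compatible f)
    {u : ℕ → ℝ} (hu : ∀ n, 0 ≤ u n) (h : Tendsto (fun n => u n / n) atTop (nhds 0)) :
    Tendsto (fun n => f (u n) / f n) atTop (nhds 0) := by
  refine tendsto_order.2 ⟨fun c hc => .of_forall fun n =>
    hc.trans_le (div_nonneg (hf.apply_nonneg (hu n)) (hf.apply_nonneg n.cast_nonneg)),
    fun δ hδ => ?_⟩
  obtain ⟨ε, hε, hφ⟩ := hf.exists_eventually_apply_mul_div_lt hfc hδ
  filter_upwards [hφ, (tendsto_order.1 h).2 ε hε, eventually_gt_atTop 0] with n hφn hun hn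
  have hn : (0 : ℝ) < n := Nat.cast_pos.2 hn
  have hu_le : u n ≤ n * ε := by rw [div_lt_iff₀' hn] at hun; exact hun.le
  calc f (u n) / f n ≤ f (n * ε) / f n :=
        div_le_div_of_nonneg_right (hf.monotoneOn (hu n) (mul_nonneg hn.le hε.le) hu_le)
          (hf.apply_nonneg hn.le)
    _ < δ := hφn

theorem tendsto_apply_div_iff_tendsto_div (hf : IsModulus f) (hfc : Compatible f)
    {u : ℕ → ℝ} (hu : ∀ n, 0 ≤ u n) :
    Tendsto (fun n => f (u n) / f n) atTop (nhds 0) ↔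
      Tendsto (fun n => u n / n) atTop (nhds 0) :=
  ⟨hf.tendsto_div_of_tendsto_apply_div hu fun n => n.cast_nonneg,
    hf.tendsto_apply_div_of_tendsto_div hfc hu⟩

end IsModulus

theorem fStrongCesaro_iff {f : ℝ → ℝ} (hf : IsModulus f) (hfc : Compatible f) {x : ℕ → ℝ}
    {L : ℝ} : FStrongCesaro f x L ↔
      Tendsto (fun n => (∑ j ∈ Finset.range n, |x j - L|) / n) atTop (nhds 0) :=
  hf.tendsto_apply_div_iff_tendsto_div hfc fun _ =>
    Finset.sum_nonneg fun _ _ => abs_nonneg _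

theorem wijsman_fcesaro_iff_cesaro_of_compatible_general {X : Type*} [MetricSpace X]
    (f : ℝ → ℝ) (hf : IsModulus f) (hfc : Compatible f)
    (A : ℕ → Set X) (B : Set X) :
    WijsmanFStrongCesaro f A B ↔ WijsmanStrongCesaro A B :=
  forall_congr' fun _ => fStrongCesaro_iff hf hfc

theorem wijsman_fcesaro_iff_cesaro_of_compatible {X : Type*} [MetricSpace X]
    (f : ℝ → ℝ) (hf : IsModulus f) (hfc : Compatible f)
    (A : ℕ → Set X) (B : Set X)
    (hA : ∀ n, (A n).Nonempty ∧ IsClosed (A n)) (hB : B.Nonempty ∧ IsClosed B) :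
    WijsmanFStrongCesaro f A B ↔ WijsmanStrongCesaro A B :=
  wijsman_fcesaro_iff_cesaro_of_compatible_general f hf hfc A B
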